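/- For a finitely generated group Q and a finitely generated ℤQ-module A, the invariant Σ⁰(Q; A) = {[χ] ∈ S(Q) | A is finitely generated over ℤQ_χ} is an open subset of the character sphere S(Q). -/

import Mathlib

def fgOver {Q : Type*} [Group Q] (M : Set Q) (A : Type*) [AddCommGroup A]
    [Module (MonoidAlgebra ℤ Q) A] : Prop :=
  ∃ S : Finset A, AddSubgroup.closure
    {x : A | ∃ s ∈ S, ∃ q ∈ M, x = (MonoidAlgebra.single q (1:ℤ) : MonoidAlgebra ℤ Q) • s} = ⊤

open Classical in
noncomputable def vchi {Q : Type*} (χ : Q → ℝ) (lam : MonoidAlgebra ℤ Q) : WithTop ℝ :=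
  if h : lam = 0 then ⊤
  else ((lam.coeff.support.inf' (Finsupp.support_nonempty_iff.mpr (mt MonoidAlgebra.coeff_eq_zero.mp h)) χ : ℝ) : WithTop ℝ)

/-!
Let `A` be spanned over `ℤ` by the translates `q • s` (`s ∈ S` finite, `χ₀ q ≥ 0`). Translating by a
power of some `t` with `χ₀ t > 0` shows that the translates with `χ₀ q ≥ m` span `A` for every `m`.
Choose `m` above `χ₀ y + 1` for all `y` in a finite generating set `Y` of `Q` as a monoid, and write each
`y • s` as a finite combination of translates `p • s'` with `χ₀ p ≥ m`. These finitely many strict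
inequalities `χ y + 1 < χ p` persist for `χ` near `χ₀`, and for such `χ` any `q • s = q' • (y • s)`
with `χ q < 0` is a combination of translates `(q' p) • s'` whose `χ`-value exceeds `χ q` by at
least `1`; induction on `⌈-χ q⌉` then puts every translate of `S` in the `ℤ`-span of its
`χ`-nonnegative translates.
-/

open MonoidAlgebra Submodule

section Translates

variable {Q : Type*} [Group Q] {A : Type*} [AddCommGroup A] [Module (MonoidAlgebra ℤ Q) A]

def translates (M : Set Q) (S : Set A) : Set A :=
  {x : A | ∃ s ∈ S, ∃ q ∈ M, x = (single q (1 : ℤ) : MonoidAlgebra ℤ Q) • s}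

theorem fgOver_iff_span_translates (M : Set Q) :
    fgOver M A ↔ ∃ S : Finset A, span ℤ (translates M (S : Set A)) = ⊤ := by
  simp only [fgOver, ← span_int_eq_addSubgroupClosure, toAddSubgroup_eq_top]
  rfl

theorem single_smul_mem_span_translates {M M' : Set Q} {S : Set A} {g : Q}
    (hg : ∀ q ∈ M, g * q ∈ M') {x : A} (hx : x ∈ span ℤ (translates M S)) :
    (single g (1 : ℤ) : MonoidAlgebra ℤ Q) • x ∈ span ℤ (translates M' S) := by
  let f := (DistribSMul.toAddMonoidHom A (single g (1 : ℤ) : MonoidAlgebra ℤ Q)).toIntLinearMap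
  refine span_mono ?_ (apply_mem_span_image_of_mem_span f hx)
  rintro _ ⟨_, ⟨s, hs, q, hq, rfl⟩, rfl⟩
  exact ⟨s, hs, g * q, hg q hq, by simp [f, ← mul_smul, single_mul_single]⟩

theorem span_translates_eq_top_of_mul_mem {M M' : Set Q} {S : Set A} (g : Q)
    (hg : ∀ q ∈ M, g * q ∈ M') (hS : span ℤ (translates M S) = ⊤) :
    span ℤ (translates M' S) = ⊤ := by
  refine eq_top_iff'.2 fun x => ?_
  have hx : x = (single g (1 : ℤ) : MonoidAlgebra ℤ Q) • (single g⁻¹ (1 : ℤ)) • x := by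
    rw [← mul_smul, single_mul_single, mul_inv_cancel, one_mul, ← one_def, one_smul]
  rw [hx]
  exact single_smul_mem_span_translates hg (hS ▸ mem_top)

theorem exists_finset_of_mem_span_translates {M : Set Q} {S : Set A} {x : A}
    (hx : x ∈ span ℤ (translates M S)) :
    ∃ G : Finset Q, (G : Set Q) ⊆ M ∧ x ∈ span ℤ (translates (G : Set Q) S) := by
  classical
  obtain ⟨T, hTM, hxT⟩ := mem_span_finite_of_mem_span hx
  have hT : ∀ t ∈ T, ∃ q ∈ M, ∃ s ∈ S, t = (single q (1 : ℤ) : MonoidAlgebra ℤ Q) • s := by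
    intro t ht
    obtain ⟨s, hs, q, hq, rfl⟩ := hTM ht
    exact ⟨q, hq, s, hs, rfl⟩
  choose! f hfM hfS using hT
  refine ⟨T.image f, by simpa [Set.subset_def] using hfM, span_le.2 (fun t ht => ?_) hxT⟩
  obtain ⟨s, hs, hts⟩ := hfS t ht
  exact subset_span ⟨s, hs, f t, Finset.mem_image_of_mem f ht, hts⟩

end Translates

section Characters

variable {Q : Type*} [Group Q] {χ : Q → ℝ}

theorem map_one_of_map_mul (hχ : ∀ a b, χ (a * b) = χ a + χ b) : χ 1 = 0 := by
  simpa using hχ 1 1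

theorem map_inv_of_map_mul (hχ : ∀ a b, χ (a * b) = χ a + χ b) (q : Q) : χ q⁻¹ = -χ q := by
  linarith [hχ q⁻¹ q, inv_mul_cancel q ▸ map_one_of_map_mul hχ]

theorem map_pow_of_map_mul (hχ : ∀ a b, χ (a * b) = χ a + χ b) (q : Q) (k : ℕ) :
    χ (q ^ k) = k * χ q := by
  induction k with
  | zero => simpa using map_one_of_map_mul hχ
  | succ k ih => rw [pow_succ, hχ, ih]; push_cast; ring

theorem exists_pos_of_map_mul (hχ : ∀ a b, χ (a * b) = χ a + χ b) (hne : χ ≠ 0) :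
    ∃ t, 0 < χ t := by
  obtain ⟨q, hq⟩ := Function.ne_iff.1 hne
  rcases hq.lt_or_gt with hq | hq
  · exact ⟨q⁻¹, by rw [map_inv_of_map_mul hχ]; simpa using hq⟩
  · exact ⟨q, hq⟩

end Characters

section SigmaZero

variable {Q : Type*} [Group Q] {A : Type*} [AddCommGroup A] [Module (MonoidAlgebra ℤ Q) A]
  {χ : Q → ℝ} {S : Set A}

theorem span_translates_setOf_le_eq_top (hχ : ∀ a b, χ (a * b) = χ a + χ b) (hne : χ ≠ 0)
    (hS : span ℤ (translates {q | 0 ≤ χ q} S) = ⊤) (m : ℝ) :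
    span ℤ (translates {q | m ≤ χ q} S) = ⊤ := by
  obtain ⟨t, ht⟩ := exists_pos_of_map_mul hχ hne
  obtain ⟨k, hk⟩ := exists_nat_ge (m / χ t)
  refine span_translates_eq_top_of_mul_mem (t ^ k) (fun q (hq : 0 ≤ χ q) => ?_) hS
  rw [Set.mem_ofPred_eq, hχ, map_pow_of_map_mul hχ]
  linarith [(div_le_iff₀ ht).1 hk]

theorem span_translates_nonneg_eq_top (hχ : ∀ a b, χ (a * b) = χ a + χ b) {Y : Set Q}
    (hY : Submonoid.closure Y = ⊤) (hS : span ℤ (translates (Set.univ : Set Q) S) = ⊤)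
    (hgap : ∀ y ∈ Y, ∀ s ∈ S, ∃ G : Set Q, (∀ p ∈ G, χ y + 1 ≤ χ p) ∧
      (single y (1 : ℤ) : MonoidAlgebra ℤ Q) • s ∈ span ℤ (translates G S)) :
    span ℤ (translates {q | 0 ≤ χ q} S) = ⊤ := by
  have hlevel : ∀ n : ℕ, translates {q | -(n : ℝ) ≤ χ q} S ⊆ span ℤ (translates {q | 0 ≤ χ q} S) := by
    intro n
    induction n with
    | zero => simp only [Nat.cast_zero, neg_zero]; exact subset_span
    | succ n ih =>
      rintro _ ⟨s, hs, q, hq, rfl⟩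
      by_cases hq₀ : 0 ≤ χ q
      · exact subset_span ⟨s, hs, q, hq₀, rfl⟩
      obtain rfl | ⟨q', y, hy, rfl⟩ : q = 1 ∨ ∃ q', ∃ y ∈ Y, q = q' * y :=
        Submonoid.induction_of_closure_eq_top_right hY q (Or.inl rfl)
          fun q' y hy _ => Or.inr ⟨q', y, hy, rfl⟩
      · exact absurd (map_one_of_map_mul hχ).ge hq₀
      obtain ⟨G, hG, hyG⟩ := hgap y hy s hs
      have hsplit : (single (q' * y) (1 : ℤ) : MonoidAlgebra ℤ Q) • s =
          (single q' (1 : ℤ) : MonoidAlgebra ℤ Q) • (single y (1 : ℤ)) • s := by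
        rw [← mul_smul, single_mul_single, one_mul]
      rw [hsplit]
      refine span_le.2 ih (single_smul_mem_span_translates (fun p hp => ?_) hyG)
      simp only [Set.mem_ofPred_eq, hχ] at hq ⊢
      push_cast at hq
      linarith [hG p hp]
  refine eq_top_iff.2 (hS ▸ span_le.2 ?_)
  rintro _ ⟨s, hs, q, -, rfl⟩
  obtain ⟨n, hn⟩ := exists_nat_ge (-χ q)
  exact hlevel n ⟨s, hs, q, by simp only [Set.mem_ofPred_eq]; linarith, rfl⟩

end SigmaZero

theorem stmt13_general {Q : Type*} [Group Q] (hQ : Group.FG Q)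
    (A : Type*) [AddCommGroup A] [Module (MonoidAlgebra ℤ Q) A] :
    IsOpen {χ : {f : Q → ℝ // (∀ a b : Q, f (a * b) = f a + f b) ∧ f ≠ 0} |
      fgOver {q : Q | 0 ≤ χ.1 q} A} := by
  refine isOpen_iff_mem_nhds.2 fun χ₀ hχ₀ => ?_
  obtain ⟨S, hS⟩ := (fgOver_iff_span_translates _).1 hχ₀
  obtain ⟨Y, hY⟩ := (Group.fg_iff_monoid_fg.1 hQ).fg_top
  obtain ⟨m, hm⟩ := (Y.image χ₀.1).bddAbove
  have hspan := span_translates_setOf_le_eq_top χ₀.2.1 χ₀.2.2 hS (m + 2)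
  choose G hGm hG using fun (y : Q) (s : A) =>
    exists_finset_of_mem_span_translates (eq_top_iff'.1 hspan ((single y (1 : ℤ)) • s))
  have hnear : ∀ᶠ χ in nhds χ₀, ∀ y ∈ Y, ∀ s ∈ S, ∀ p ∈ G y s, χ.1 y + 1 < χ.1 p := by
    simp only [Filter.eventually_all_finset]
    intro y hy s _ p hp
    refine (isOpen_lt (((continuous_apply y).comp continuous_subtype_val).add continuous_const)
      ((continuous_apply p).comp continuous_subtype_val)).mem_nhds ?_
    have hy_le : χ₀.1 y ≤ m := hm (Finset.mem_image_of_mem χ₀.1 hy)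
    have hp_ge : m + 2 ≤ χ₀.1 p := hGm y s hp
    show χ₀.1 y + 1 < χ₀.1 p
    linarith
  filter_upwards [hnear] with χ hχ
  refine (fgOver_iff_span_translates _).2 ⟨S, span_translates_nonneg_eq_top χ.2.1 hY ?_
    fun y hy s hs => ⟨G y s, fun p hp => (hχ y hy s hs p hp).le, hG y s⟩⟩
  exact span_translates_eq_top_of_mul_mem 1 (fun _ _ => Set.mem_univ _) hS

/-- the set of rays of nonzero characters over which A is finitely
generated is open. The character sphere is the quotient of the space of nonzero
characters (with its natural topology, induced from the product topology) by
positive scaling; membership in Σ⁰ is invariant under positive scaling, so openness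
in the sphere is equivalent to openness of the corresponding set of nonzero
characters. -/
theorem stmt13 {Q : Type*} [Group Q] (hQ : Group.FG Q)
    (A : Type*) [AddCommGroup A] [Module (MonoidAlgebra ℤ Q) A]
    [Module.Finite (MonoidAlgebra ℤ Q) A] :
    IsOpen {χ : {f : Q → ℝ // (∀ a b : Q, f (a * b) = f a + f b) ∧ f ≠ 0} |
      fgOver {q : Q | 0 ≤ χ.1 q} A} :=
  stmt13_general hQ A
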